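/- arXiv:2502.00166 — 3 statements merged into one kernel-verified Lean document; each statement's English description precedes it below -/
import Mathlib

section
/- Let σ be a polynomial of degree ≤ 2 and κ a polynomial of degree ≤ 1 in the complex variable z. Define the first-order differential operators on functions of (t,s,z) ∈ ℂ³: N = t∂_t − s∂_s, A₊ = t∂_z + σ'(z)∂_s, A₋ = s∂_z + σ'(z)∂_t + κ(z)/t. Then [N, A₊] = A₊, [N, A₋] = −A₋, and [A₊, A₋] = σ''·N + κ'·1, where σ'' denotes the (constant) second derivative of σ and κ' the (constant) derivative of κ. -/
open Polynomial

/-- Partial derivative in the `t` variable of a function of `(t,s,z) ∈ ℂ³`. -/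
noncomputable def pdT (f : ℂ × ℂ × ℂ → ℂ) (p : ℂ × ℂ × ℂ) : ℂ := fderiv ℂ f p (1, 0, 0)

/-- Partial derivative in the `s` variable. -/
noncomputable def pdS (f : ℂ × ℂ × ℂ → ℂ) (p : ℂ × ℂ × ℂ) : ℂ := fderiv ℂ f p (0, 1, 0)

/-- Partial derivative in the `z` variable. -/
noncomputable def pdZ (f : ℂ × ℂ × ℂ → ℂ) (p : ℂ × ℂ × ℂ) : ℂ := fderiv ℂ f p (0, 0, 1)

/-- `N = t ∂_t - s ∂_s`. -/
noncomputable def Nop (f : ℂ × ℂ × ℂ → ℂ) (p : ℂ × ℂ × ℂ) : ℂ :=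
  p.1 * pdT f p - p.2.1 * pdS f p

/-- `A₊ = t ∂_z + σ'(z) ∂_s`. -/
noncomputable def ApOp (σ : Polynomial ℂ) (f : ℂ × ℂ × ℂ → ℂ) (p : ℂ × ℂ × ℂ) : ℂ :=
  p.1 * pdZ f p + (derivative σ).eval p.2.2 * pdS f p

/-- `A₋ = s ∂_z + σ'(z) ∂_t + κ(z)/t`. -/
noncomputable def AmOp (σ κ : Polynomial ℂ) (f : ℂ × ℂ × ℂ → ℂ) (p : ℂ × ℂ × ℂ) : ℂ :=
  p.2.1 * pdZ f p + (derivative σ).eval p.2.2 * pdT f p + κ.eval p.2.2 / p.1 * f p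

/-!
Each of `N`, `A₊`, `A₋` is a first-order operator `V·∇ + c`. The commutator of two such operators
is again of first order: its vector field is the Lie bracket `[V, W]` and its potential is
`V·∇d - W·∇c`, because the second derivatives of `f` cancel by symmetry. The relations therefore
reduce to three Lie brackets of polynomial vector fields on `ℂ³`, which are `A₊`, `-A₋` and
`σ''(z) N`, and to the derivatives of the potential `κ(z)/t` along `N` and `A₊`, which are
`-κ(z)/t` and `κ'(z)`. For `deg σ ≤ 2` and `deg κ ≤ 1` the functions `σ''` and `κ'` are constant.
-/

open VectorField

section FirstOrderOperator

variable {𝕜 : Type*} [NontriviallyNormedField 𝕜]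
  {E : Type*} [NormedAddCommGroup E] [NormedSpace 𝕜 E]
  {F : Type*} [NormedAddCommGroup F] [NormedSpace 𝕜 F]

variable (𝕜) in
noncomputable def firstOrderOp (V : E → E) (c : E → 𝕜) (f : E → F) (x : E) : F :=
  fderiv 𝕜 f x (V x) + c x • f x

theorem firstOrderOp_commutator {V W : E → E} {c d : E → 𝕜} {f : E → F} {x : E}
    {n : WithTop ℕ∞} (hf : ContDiffAt 𝕜 n f x) (hn : minSmoothness 𝕜 2 ≤ n)
    (hV : DifferentiableAt 𝕜 V x) (hW : DifferentiableAt 𝕜 W x)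
    (hc : DifferentiableAt 𝕜 c x) (hd : DifferentiableAt 𝕜 d x) :
    firstOrderOp 𝕜 V c (firstOrderOp 𝕜 W d f) x - firstOrderOp 𝕜 W d (firstOrderOp 𝕜 V c f) x =
      firstOrderOp 𝕜 (lieBracket 𝕜 V W)
        (fun y ↦ fderiv 𝕜 d y (V y) - fderiv 𝕜 c y (W y)) f x := by
  have h2 : (2 : WithTop ℕ∞) ≤ n := le_minSmoothness.trans hn
  have hf₀ : DifferentiableAt 𝕜 f x := hf.differentiableAt (zero_lt_two.trans_le h2).ne'
  have hf₁ : DifferentiableAt 𝕜 (fderiv 𝕜 f) x :=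
    (hf.fderiv_right (m := 1) (by rw [one_add_one_eq_two]; exact h2)).differentiableAt
      one_ne_zero
  unfold firstOrderOp
  rw [fderiv_fun_add (hf₁.clm_apply hW) (hd.fun_smul hf₀),
    fderiv_fun_add (hf₁.clm_apply hV) (hc.fun_smul hf₀), fderiv_fun_smul hd hf₀,
    fderiv_fun_smul hc hf₀, fderiv_apply_lieBracket hf hn hW hV]
  simp only [add_apply, smul_apply, ContinuousLinearMap.smulRight_apply, sub_smul, smul_add,
    smul_smul, mul_comm (c x)]
  abel

end FirstOrderOperator

theorem Polynomial.eval_derivative_of_natDegree_le_one {R : Type*} [CommSemiring R] {P : R[X]}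
    (hP : P.natDegree ≤ 1) (z : R) : (derivative P).eval z = (derivative P).coeff 0 := by
  rw [eq_C_of_natDegree_le_zero ((natDegree_derivative_le P).trans (by omega))]
  simp

local notation "ℂ³" => ℂ × ℂ × ℂ

theorem clm_apply_eq_coords (L : ℂ³ →L[ℂ] ℂ) (a b c : ℂ) :
    L (a, b, c) = a * L (1, 0, 0) + b * L (0, 1, 0) + c * L (0, 0, 1) := by
  have hdecomp : ((a, b, c) : ℂ³) = a • (1, 0, 0) + b • (0, 1, 0) + c • (0, 0, 1) := by
    ext <;> simp
  rw [hdecomp, map_add, map_add, map_smul, map_smul, map_smul, smul_eq_mul, smul_eq_mul,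
    smul_eq_mul]

theorem fderiv_snd_fst_apply (p v : ℂ³) : fderiv ℂ (fun q : ℂ³ ↦ q.2.1) p v = v.2.1 := by
  rw [show (fun q : ℂ³ ↦ q.2.1) =
      ContinuousLinearMap.fst ℂ ℂ ℂ ∘L ContinuousLinearMap.snd ℂ ℂ (ℂ × ℂ) from rfl,
    ContinuousLinearMap.fderiv]
  rfl

theorem fderiv_snd_snd_apply (p v : ℂ³) : fderiv ℂ (fun q : ℂ³ ↦ q.2.2) p v = v.2.2 := by
  rw [show (fun q : ℂ³ ↦ q.2.2) =
      ContinuousLinearMap.snd ℂ ℂ ℂ ∘L ContinuousLinearMap.snd ℂ ℂ (ℂ × ℂ) from rfl,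
    ContinuousLinearMap.fderiv]
  rfl

theorem fderiv_eval_snd_snd_apply (P : ℂ[X]) (p v : ℂ³) :
    fderiv ℂ (fun q : ℂ³ ↦ P.eval q.2.2) p v = (derivative P).eval p.2.2 * v.2.2 := by
  rw [fderiv_fun_comp p P.differentiableAt (by fun_prop)]
  simp [Polynomial.fderiv, fderiv_snd_snd_apply, mul_comm]

theorem fderiv_inv_fst_apply {p : ℂ³} (hp : p.1 ≠ 0) (v : ℂ³) :
    fderiv ℂ (fun q : ℂ³ ↦ q.1⁻¹) p v = -v.1 / p.1 ^ 2 := by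
  rw [fderiv_fun_comp p (differentiableAt_inv hp) (by fun_prop)]
  simp only [fderiv_inv, fderiv_fst, ContinuousLinearMap.comp_apply,
    ContinuousLinearMap.coe_fst', ContinuousLinearMap.toSpanSingleton_apply, smul_eq_mul]
  ring

def fieldN (q : ℂ³) : ℂ³ := (q.1, -q.2.1, 0)

noncomputable def fieldAp (σ : ℂ[X]) (q : ℂ³) : ℂ³ := (0, (derivative σ).eval q.2.2, q.1)

noncomputable def fieldAm (σ : ℂ[X]) (q : ℂ³) : ℂ³ := ((derivative σ).eval q.2.2, 0, q.2.1)

noncomputable def potentialAm (κ : ℂ[X]) (q : ℂ³) : ℂ := κ.eval q.2.2 / q.1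

theorem Nop_eq_firstOrderOp (f : ℂ³ → ℂ) : Nop f = firstOrderOp ℂ fieldN (fun _ ↦ 0) f := by
  funext p
  simp only [Nop, firstOrderOp, fieldN, pdT, pdS]
  rw [clm_apply_eq_coords _ p.1]
  ring

theorem ApOp_eq_firstOrderOp (σ : ℂ[X]) (f : ℂ³ → ℂ) :
    ApOp σ f = firstOrderOp ℂ (fieldAp σ) (fun _ ↦ 0) f := by
  funext p
  simp only [ApOp, firstOrderOp, fieldAp, pdZ, pdS]
  rw [clm_apply_eq_coords _ 0 _ p.1]
  ring

theorem AmOp_eq_firstOrderOp (σ κ : ℂ[X]) (f : ℂ³ → ℂ) :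
    AmOp σ κ f = firstOrderOp ℂ (fieldAm σ) (potentialAm κ) f := by
  funext p
  simp only [AmOp, firstOrderOp, fieldAm, potentialAm, pdZ, pdT, smul_eq_mul]
  rw [clm_apply_eq_coords _ ((derivative σ).eval p.2.2) 0 p.2.1]
  ring

theorem differentiable_fieldN : Differentiable ℂ fieldN := by
  unfold fieldN; fun_prop

theorem differentiable_fieldAp (σ : ℂ[X]) : Differentiable ℂ (fieldAp σ) := by
  unfold fieldAp; fun_prop

theorem differentiable_fieldAm (σ : ℂ[X]) : Differentiable ℂ (fieldAm σ) := by
  unfold fieldAm; fun_prop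

theorem differentiableAt_potentialAm (κ : ℂ[X]) {p : ℂ³} (hp : p.1 ≠ 0) :
    DifferentiableAt ℂ (potentialAm κ) p := by
  unfold potentialAm; fun_prop (disch := exact hp)

theorem fderiv_fieldN_apply (p v : ℂ³) : fderiv ℂ fieldN p v = (v.1, -v.2.1, 0) := by
  unfold fieldN
  rw [DifferentiableAt.fderiv_prodMk (by fun_prop) (by fun_prop),
    DifferentiableAt.fderiv_prodMk (by fun_prop) (by fun_prop)]
  simp [fderiv_fst, fderiv_snd_fst_apply]

theorem fderiv_fieldAp_apply (σ : ℂ[X]) (p v : ℂ³) :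
    fderiv ℂ (fieldAp σ) p v = (0, (derivative (derivative σ)).eval p.2.2 * v.2.2, v.1) := by
  unfold fieldAp
  rw [DifferentiableAt.fderiv_prodMk (by fun_prop) (by fun_prop),
    DifferentiableAt.fderiv_prodMk (by fun_prop) (by fun_prop)]
  simp [fderiv_fst, fderiv_eval_snd_snd_apply]

theorem fderiv_fieldAm_apply (σ : ℂ[X]) (p v : ℂ³) :
    fderiv ℂ (fieldAm σ) p v = ((derivative (derivative σ)).eval p.2.2 * v.2.2, 0, v.2.1) := by
  unfold fieldAm
  rw [DifferentiableAt.fderiv_prodMk (by fun_prop) (by fun_prop),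
    DifferentiableAt.fderiv_prodMk (by fun_prop) (by fun_prop)]
  simp [fderiv_snd_fst_apply, fderiv_eval_snd_snd_apply]

theorem fderiv_potentialAm_apply (κ : ℂ[X]) {p : ℂ³} (hp : p.1 ≠ 0) (v : ℂ³) :
    fderiv ℂ (potentialAm κ) p v =
      (derivative κ).eval p.2.2 * v.2.2 / p.1 - κ.eval p.2.2 * v.1 / p.1 ^ 2 := by
  unfold potentialAm
  simp_rw [div_eq_mul_inv]
  rw [fderiv_fun_mul (by fun_prop) (by fun_prop (disch := exact hp))]
  simp only [add_apply, smul_apply, smul_eq_mul, fderiv_eval_snd_snd_apply,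
    fderiv_inv_fst_apply hp]
  ring

theorem lieBracket_fieldN_fieldAp (σ : ℂ[X]) (p : ℂ³) :
    lieBracket ℂ fieldN (fieldAp σ) p = fieldAp σ p := by
  simp [lieBracket, fderiv_fieldN_apply, fderiv_fieldAp_apply, fieldN, fieldAp]

theorem lieBracket_fieldN_fieldAm (σ : ℂ[X]) (p : ℂ³) :
    lieBracket ℂ fieldN (fieldAm σ) p = -fieldAm σ p := by
  simp [lieBracket, fderiv_fieldN_apply, fderiv_fieldAm_apply, fieldN, fieldAm]

theorem lieBracket_fieldAp_fieldAm (σ : ℂ[X]) (p : ℂ³) :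
    lieBracket ℂ (fieldAp σ) (fieldAm σ) p =
      (derivative (derivative σ)).eval p.2.2 • fieldN p := by
  simp [lieBracket, fderiv_fieldAp_apply, fderiv_fieldAm_apply, fieldN, fieldAp, fieldAm]

section Commutators

variable {f : ℂ³ → ℂ} (σ κ : ℂ[X]) (p : ℂ³)

theorem Nop_commutator_ApOp (hf : ContDiff ℂ ⊤ f) :
    Nop (ApOp σ f) p - ApOp σ (Nop f) p = ApOp σ f p := by
  simp only [Nop_eq_firstOrderOp, ApOp_eq_firstOrderOp]
  rw [firstOrderOp_commutator hf.contDiffAt le_top differentiable_fieldN.differentiableAt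
    (differentiable_fieldAp σ).differentiableAt (differentiableAt_const 0)
    (differentiableAt_const 0)]
  simp [firstOrderOp, lieBracket_fieldN_fieldAp]

theorem Nop_commutator_AmOp (hf : ContDiff ℂ ⊤ f) (hp : p.1 ≠ 0) :
    Nop (AmOp σ κ f) p - AmOp σ κ (Nop f) p = -AmOp σ κ f p := by
  simp only [Nop_eq_firstOrderOp, AmOp_eq_firstOrderOp]
  rw [firstOrderOp_commutator hf.contDiffAt le_top differentiable_fieldN.differentiableAt
    (differentiable_fieldAm σ).differentiableAt (differentiableAt_const 0)
    (differentiableAt_potentialAm κ hp)]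
  simp [firstOrderOp, lieBracket_fieldN_fieldAm, fderiv_potentialAm_apply κ hp, fieldN, potentialAm,
    sq, mul_div_mul_right _ _ hp, add_comm]

theorem ApOp_commutator_AmOp (hf : ContDiff ℂ ⊤ f) (hp : p.1 ≠ 0) :
    ApOp σ (AmOp σ κ f) p - AmOp σ κ (ApOp σ f) p =
      (derivative (derivative σ)).eval p.2.2 * Nop f p + (derivative κ).eval p.2.2 * f p := by
  simp only [Nop_eq_firstOrderOp, ApOp_eq_firstOrderOp, AmOp_eq_firstOrderOp]
  rw [firstOrderOp_commutator hf.contDiffAt le_top (differentiable_fieldAp σ).differentiableAt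
    (differentiable_fieldAm σ).differentiableAt (differentiableAt_const 0)
    (differentiableAt_potentialAm κ hp)]
  simp [firstOrderOp, lieBracket_fieldAp_fieldAm, fderiv_potentialAm_apply κ hp, fieldAp,
    mul_div_cancel_right₀ _ hp]

end Commutators

/-- The commutation relations `[N,A₊] = A₊`, `[N,A₋] = -A₋`,
`[A₊,A₋] = σ''·N + κ'·𝟙` for the differential operators of Miller's Lie algebra. -/
theorem miller_commutation_relations (σ κ : Polynomial ℂ)
    (hσ : σ.natDegree ≤ 2) (hκ : κ.natDegree ≤ 1)
    (f : ℂ × ℂ × ℂ → ℂ) (hf : ContDiff ℂ ⊤ f) (p : ℂ × ℂ × ℂ) (hp : p.1 ≠ 0) :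
    Nop (ApOp σ f) p - ApOp σ (Nop f) p = ApOp σ f p ∧
    Nop (AmOp σ κ f) p - AmOp σ κ (Nop f) p = -(AmOp σ κ f p) ∧
    ApOp σ (AmOp σ κ f) p - AmOp σ κ (ApOp σ f) p
      = (derivative (derivative σ)).coeff 0 * Nop f p + (derivative κ).coeff 0 * f p := by
  have hσ' : (derivative σ).natDegree ≤ 1 := (natDegree_derivative_le σ).trans (by omega)
  refine ⟨Nop_commutator_ApOp σ p hf, Nop_commutator_AmOp σ κ p hf hp, ?_⟩
  rw [ApOp_commutator_AmOp σ κ p hf hp, eval_derivative_of_natDegree_le_one hσ',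
    eval_derivative_of_natDegree_le_one hκ]
end

section
/- Let σ, τ be polynomials with deg σ ≤ 2 and deg τ ≤ 1, and let η ∈ ℂ. If P is a polynomial of degree exactly n satisfying σ(z)P''(z) + τ(z)P'(z) + ηP(z) = 0, then n(n−1)σ''/2 + nτ' + η = 0. -/
/-!
Comparing coefficients of `zⁿ`: since `deg σ ≤ 2` and `deg τ ≤ 1`, only the top coefficients
`σ₂ = σ''/2` and `τ₁ = τ'` of `σ` and `τ` meet the leading coefficient of `P` there, so the
`zⁿ`-coefficient of `σP'' + τP' + ηP` is `(n(n-1)σ₂ + nτ₁ + η)` times the leading coefficient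
of `P`, which is nonzero.
-/

open Polynomial

namespace Polynomial

variable {R : Type*} [CommSemiring R]

theorem coeff_mul_iterate_derivative_of_natDegree_le {f P : R[X]} {k n : ℕ}
    (hf : f.natDegree ≤ k) (hP : P.natDegree ≤ n) :
    (f * derivative^[k] P).coeff n = n.descFactorial k * f.coeff k * P.coeff n := by
  rcases lt_or_ge n k with hnk | hkn
  · rw [iterate_derivative_eq_zero (hP.trans_lt hnk), Nat.descFactorial_eq_zero_iff_lt.mpr hnk]
    simp
  · obtain ⟨m, rfl⟩ := Nat.exists_eq_add_of_le hkn
    have hPk : (derivative^[k] P).natDegree ≤ m :=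
      (natDegree_iterate_derivative P k).trans (by omega)
    rw [coeff_mul_add_eq_of_natDegree_le hf hPk, coeff_iterate_derivative, add_comm m k,
      nsmul_eq_mul, mul_left_comm, mul_assoc]

theorem coeff_hypergeometric_operator {σ τ P : R[X]} (η : R) {n : ℕ}
    (hσ : σ.natDegree ≤ 2) (hτ : τ.natDegree ≤ 1) (hP : P.natDegree ≤ n) :
    (σ * derivative (derivative P) + τ * derivative P + C η * P).coeff n
      = (n.descFactorial 2 * σ.coeff 2 + n * τ.coeff 1 + η) * P.coeff n := by
  have hσP := coeff_mul_iterate_derivative_of_natDegree_le hσ hP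
  have hτP := coeff_mul_iterate_derivative_of_natDegree_le hτ hP
  simp only [Function.iterate_succ_apply', Function.iterate_zero_apply, Nat.descFactorial_one]
    at hτP hσP
  rw [coeff_add, coeff_add, hσP, hτP, coeff_C_mul]
  ring

end Polynomial

/-- If a polynomial `P` of degree exactly `n` satisfies
`σP'' + τP' + ηP = 0` with `deg σ ≤ 2`, `deg τ ≤ 1`, then
`n(n−1)σ''/2 + nτ' + η = 0`. -/
theorem polynomial_eigenvalue_relation (σ τ : Polynomial ℂ)
    (hσ : σ.natDegree ≤ 2) (hτ : τ.natDegree ≤ 1) (η : ℂ)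
    (n : ℕ) (P : Polynomial ℂ) (hP0 : P ≠ 0) (hPdeg : P.natDegree = n)
    (heq : σ * derivative (derivative P) + τ * derivative P + Polynomial.C η * P = 0) :
    (n : ℂ) * ((n : ℂ) - 1) * (derivative (derivative σ)).coeff 0 / 2
      + (n : ℂ) * (derivative τ).coeff 0 + η = 0 := by
  have hlead : P.coeff n ≠ 0 := hPdeg ▸ leadingCoeff_ne_zero.mpr hP0
  have hcoeff := coeff_hypergeometric_operator η hσ hτ hPdeg.le
  rw [heq, coeff_zero, eq_comm, mul_eq_zero, or_iff_left hlead] at hcoeff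
  have hσ'' : (derivative (derivative σ)).coeff 0 = 2 * σ.coeff 2 := by
    simp only [coeff_derivative]; norm_num [mul_comm]
  have hτ' : (derivative τ).coeff 0 = τ.coeff 1 := by simp [coeff_derivative]
  rw [Nat.cast_descFactorial_two] at hcoeff
  rw [hσ'', hτ']
  linear_combination hcoeff
end

section
/- Let σ be a polynomial of degree ≤ 2, κ of degree ≤ 1, and ρ nonvanishing with σρ' = κρ on an interval/domain. Define the Rodrigues polynomial P_n(σ,κ;z) = (1/n!)·ρ(z)⁻¹·∂_zⁿ(σ(z)ⁿρ(z)). Then P_n(σ,κ;z) is a polynomial in z of degree at most n, and it satisfies the differential equation σ(z)P_n'' + (σ'(z)+κ(z))P_n' − (n(n+1)σ''/2 + nκ')P_n = 0. -/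
open Polynomial

/-- The Rodrigues expression `P_n(σ,κ;z) = (1/n!)·ρ(z)⁻¹·∂_zⁿ(σ(z)ⁿρ(z))`. -/
noncomputable def rodrigues (σ : Polynomial ℂ) (ρ : ℂ → ℂ) (n : ℕ) (z : ℂ) : ℂ :=
  ((n.factorial : ℂ))⁻¹ * (ρ z)⁻¹ * iteratedDeriv n (fun w => σ.eval w ^ n * ρ w) z

/-!
With `u = σⁿρ`, the Pearson equation `σρ' = κρ` shows inductively that `u⁽ᵏ⁾ = σⁿ⁻ᵏ Q_k ρ` for
`k ≤ n` with `deg Q_k ≤ k`, so `P_n = Q_n / n!` is a polynomial of degree at most `n`.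
For the equation, `(σu)' = ((n+1)σ' + κ) u`; differentiating this `n + 1` times by Leibniz's rule
(`σ` is quadratic and `(n+1)σ' + κ` affine, so only three resp. two terms survive) gives a
second-order equation for `v = u⁽ⁿ⁾ = Q_n ρ`. Conjugating by `ρ` with the help of `σρ' = κρ`
turns it into `ρ` times the stated equation for `Q_n`.
-/

section

variable {𝕜 : Type*} [NontriviallyNormedField 𝕜]

namespace Polynomial

theorem contDiff_eval (p : 𝕜[X]) (n : WithTop ℕ∞) : ContDiff 𝕜 n fun x => p.eval x := by
  simpa [coe_aeval_eq_eval] using p.contDiff_aeval (𝕜 := 𝕜) n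

theorem iteratedDeriv_eval (p : 𝕜[X]) (k : ℕ) :
    iteratedDeriv k (fun x => p.eval x) = fun x => (derivative^[k] p).eval x := by
  induction k with
  | zero => simp
  | succ k ih =>
    rw [iteratedDeriv_succ, ih, Function.iterate_succ_apply']
    ext x
    exact Polynomial.deriv _

theorem iteratedDeriv_eval_mul (p : 𝕜[X]) {f : 𝕜 → 𝕜} {m : ℕ} {x : 𝕜}
    (hf : ContDiffAt 𝕜 m f x) :
    iteratedDeriv m (fun y => p.eval y * f y) x = ∑ i ∈ Finset.range (m + 1),
      m.choose i * (derivative^[i] p).eval x * iteratedDeriv (m - i) f x := by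
  simp_rw [iteratedDeriv_fun_mul (p.contDiff_eval m).contDiffAt hf, iteratedDeriv_eval]

theorem iteratedDeriv_eval_mul_of_natDegree_le_one {p : 𝕜[X]} (hp : p.natDegree ≤ 1)
    {f : 𝕜 → 𝕜} {m : ℕ} {x : 𝕜} (hf : ContDiffAt 𝕜 (m + 1) f x) :
    iteratedDeriv (m + 1) (fun y => p.eval y * f y) x =
      p.eval x * iteratedDeriv (m + 1) f x
        + (m + 1) * (derivative p).eval x * iteratedDeriv m f x := by
  rw [iteratedDeriv_eval_mul p (by exact_mod_cast hf), Finset.sum_range_succ',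
    Finset.sum_range_succ',
    Finset.sum_eq_zero fun i _ => by rw [iterate_derivative_eq_zero (by omega)]; simp]
  simp only [zero_add, Nat.choose_one_right, Nat.cast_add, Nat.cast_one, Function.iterate_one,
    add_tsub_cancel_right, Nat.choose_zero_right, Function.iterate_zero, id_eq, one_mul, tsub_zero]
  ring

theorem iteratedDeriv_eval_mul_of_natDegree_le_two {p : 𝕜[X]} (hp : p.natDegree ≤ 2)
    {f : 𝕜 → 𝕜} {m : ℕ} {x : 𝕜} (hf : ContDiffAt 𝕜 (m + 2) f x) :
    iteratedDeriv (m + 2) (fun y => p.eval y * f y) x =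
      p.eval x * iteratedDeriv (m + 2) f x
        + (m + 2) * (derivative p).eval x * iteratedDeriv (m + 1) f x
        + (m + 2).choose 2 * (derivative (derivative p)).eval x * iteratedDeriv m f x := by
  rw [iteratedDeriv_eval_mul p (by exact_mod_cast hf), Finset.sum_range_succ',
    Finset.sum_range_succ', Finset.sum_range_succ',
    Finset.sum_eq_zero fun i _ => by rw [iterate_derivative_eq_zero (by omega)]; simp]
  simp only [zero_add, Function.iterate_succ, Function.comp_apply,
    add_tsub_cancel_right, Nat.choose_one_right, Nat.cast_add, Nat.cast_ofNat, Nat.add_one_sub_one,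
    Nat.choose_zero_right, Nat.cast_one, Function.iterate_zero, id_eq, one_mul, tsub_zero]
  ring

theorem natDegree_mul_derivative_le {p q : 𝕜[X]} {a k : ℕ} (hp : p.natDegree ≤ a + 1)
    (hq : q.natDegree ≤ k) : (p * derivative q).natDegree ≤ k + a := by
  by_cases hq0 : q.natDegree = 0
  · simp [derivative_of_natDegree_zero hq0]
  · have hq' := Nat.le_sub_one_of_lt (natDegree_derivative_lt hq0)
    exact (natDegree_mul_le_of_le hp hq').trans (by omega)

end Polynomial

variable {σ κ : 𝕜[X]} {ρ : 𝕜 → 𝕜}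

theorem deriv_eval_pow_succ_mul_mul {z : 𝕜} (hρ : DifferentiableAt 𝕜 ρ z)
    (hrel : σ.eval z * deriv ρ z = κ.eval z * ρ z) (Q : 𝕜[X]) (m : ℕ) :
    deriv (fun w => (σ ^ (m + 1) * Q).eval w * ρ w) z =
      (σ ^ m * (C (m + 1 : 𝕜) * derivative σ * Q + σ * derivative Q + κ * Q)).eval z * ρ z := by
  rw [deriv_fun_mul (Polynomial.differentiableAt _) hρ, Polynomial.deriv]
  simp only [derivative_mul, derivative_pow, eval_add, eval_mul, eval_pow, eval_C]
  push_cast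
  linear_combination (σ.eval z ^ m * Q.eval z) * hrel

theorem exists_iteratedDeriv_pow_mul_eq (hσ : σ.natDegree ≤ 2) (hκ : κ.natDegree ≤ 1)
    (hρ : Differentiable 𝕜 ρ) (hrel : ∀ z, σ.eval z * deriv ρ z = κ.eval z * ρ z)
    {n k : ℕ} (hk : k ≤ n) :
    ∃ Q : 𝕜[X], Q.natDegree ≤ k ∧
      iteratedDeriv k (fun z => σ.eval z ^ n * ρ z) = fun z => (σ ^ (n - k) * Q).eval z * ρ z := by
  induction k with
  | zero => exact ⟨1, by simp, by simp⟩
  | succ k ih =>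
    obtain ⟨Q, hQ, hQk⟩ := ih (by omega)
    obtain ⟨m, hm⟩ : ∃ m, n - k = m + 1 := ⟨n - (k + 1), by omega⟩
    refine ⟨C (m + 1 : 𝕜) * derivative σ * Q + σ * derivative Q + κ * Q, ?_, ?_⟩
    · refine (natDegree_add_le_of_degree_le (natDegree_add_le_of_degree_le ?_ ?_) ?_)
      · have hσ' : (C (m + 1 : 𝕜) * derivative σ).natDegree ≤ 1 :=
          (natDegree_C_mul_le _ _).trans ((natDegree_derivative_le σ).trans (by omega))
        exact (natDegree_mul_le_of_le hσ' hQ).trans (by omega)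
      · exact natDegree_mul_derivative_le hσ hQ
      · exact (natDegree_mul_le_of_le hκ hQ).trans (by omega)
    · rw [iteratedDeriv_succ, hQk, hm, show n - (k + 1) = m by omega]
      exact funext fun z => deriv_eval_pow_succ_mul_mul (hρ z) (hrel z) Q m

theorem eval_mul_deriv_deriv_eval_mul_add (hρ : ContDiff 𝕜 2 ρ)
    (hrel : ∀ z, σ.eval z * deriv ρ z = κ.eval z * ρ z) (P : 𝕜[X]) (z : 𝕜) :
    σ.eval z * deriv (deriv fun w => P.eval w * ρ w) z
        + ((derivative σ).eval z - κ.eval z) * deriv (fun w => P.eval w * ρ w) z =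
      ρ z * (σ.eval z * (derivative (derivative P)).eval z
        + ((derivative σ).eval z + κ.eval z) * (derivative P).eval z
        + (derivative κ).eval z * P.eval z) := by
  have hρ₁ : Differentiable 𝕜 ρ := hρ.differentiable (by simp)
  have hρ₂ : Differentiable 𝕜 (deriv ρ) := (hρ.iterate_deriv' 1 1).differentiable (by simp)
  have hderiv : deriv (fun w => P.eval w * ρ w) =
      fun w => (derivative P).eval w * ρ w + P.eval w * deriv ρ w :=
    funext fun w => by rw [deriv_fun_mul P.differentiableAt (hρ₁ w), Polynomial.deriv]
  have hrel' : (derivative σ).eval z * deriv ρ z + σ.eval z * deriv (deriv ρ) z =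
      (derivative κ).eval z * ρ z + κ.eval z * deriv ρ z := by
    have := congrArg (deriv · z) (funext hrel)
    simpa only [deriv_fun_mul σ.differentiableAt (hρ₂ z), deriv_fun_mul κ.differentiableAt (hρ₁ z),
      Polynomial.deriv] using this
  rw [hderiv, deriv_fun_add ((derivative P).differentiableAt.fun_mul (hρ₁ z))
      (P.differentiableAt.fun_mul (hρ₂ z)), deriv_fun_mul (derivative P).differentiableAt (hρ₁ z),
    deriv_fun_mul P.differentiableAt (hρ₂ z), Polynomial.deriv, Polynomial.deriv]
  linear_combination 2 * (derivative P).eval z * hrel z + P.eval z * hrel'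

theorem iteratedDeriv_pow_mul_ode [NeZero (2 : 𝕜)] (hσ : σ.natDegree ≤ 2) (hκ : κ.natDegree ≤ 1)
    {n : ℕ} (hρ : ContDiff 𝕜 (n + 2) ρ) (hrel : ∀ z, σ.eval z * deriv ρ z = κ.eval z * ρ z)
    (z : 𝕜) :
    σ.eval z * iteratedDeriv (n + 2) (fun w => σ.eval w ^ n * ρ w) z
        + ((derivative σ).eval z - κ.eval z)
          * iteratedDeriv (n + 1) (fun w => σ.eval w ^ n * ρ w) z =
      (n + 1) * (n * (derivative (derivative σ)).eval z / 2 + (derivative κ).eval z)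
        * iteratedDeriv n (fun w => σ.eval w ^ n * ρ w) z := by
  set u := fun w => σ.eval w ^ n * ρ w
  set r := C (n + 1 : 𝕜) * derivative σ + κ
  have hu : ContDiff 𝕜 (n + 2) u := ((σ.contDiff_eval _).pow n).mul hρ
  have hr : r.natDegree ≤ 1 := natDegree_add_le_of_degree_le
    ((natDegree_C_mul_le _ _).trans ((natDegree_derivative_le σ).trans (by omega))) hκ
  -- `(σ u)' = (σⁿ⁺¹ρ)' = ((n+1)σ' + κ) σⁿρ` by the Pearson equation
  have hσu : deriv (fun w => σ.eval w * u w) = fun w => r.eval w * u w := by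
    ext w
    have := deriv_eval_pow_succ_mul_mul (hρ.differentiable (by simp) w) (hrel w) 1 n
    simp only [mul_one, derivative_one, mul_zero, add_zero, eval_mul, eval_pow] at this
    simp only [u, r, ← mul_assoc, ← pow_succ', this, eval_mul, eval_add, eval_C]
    ring
  have key := iteratedDeriv_eval_mul_of_natDegree_le_two hσ (hu.contDiffAt (x := z))
  rw [iteratedDeriv_succ', hσu, iteratedDeriv_eval_mul_of_natDegree_le_one hr
    (hu.of_le (by norm_cast; omega)).contDiffAt] at key
  simp only [r, derivative_add, derivative_C_mul, eval_add, eval_mul, eval_C,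
    Nat.cast_choose_two 𝕜] at key
  push_cast at key
  field_simp at key ⊢
  linear_combination -key

theorem ode_of_iteratedDeriv_pow_mul_eq [NeZero (2 : 𝕜)] (hσ : σ.natDegree ≤ 2)
    (hκ : κ.natDegree ≤ 1) {n : ℕ} (hρ : ContDiff 𝕜 (n + 2) ρ) (hρ0 : ∀ z, ρ z ≠ 0)
    (hrel : ∀ z, σ.eval z * deriv ρ z = κ.eval z * ρ z) {Q : 𝕜[X]}
    (hQ : iteratedDeriv n (fun z => σ.eval z ^ n * ρ z) = fun z => Q.eval z * ρ z) :
    σ * derivative (derivative Q) + (derivative σ + κ) * derivative Q =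
      C (n * (n + 1) * (derivative (derivative σ)).coeff 0 / 2 + n * (derivative κ).coeff 0)
        * Q := by
  have hσ'' : derivative (derivative σ) = C ((derivative (derivative σ)).coeff 0) :=
    eq_C_of_natDegree_le_zero ((natDegree_derivative_le _).trans
      (by have := natDegree_derivative_le σ; omega))
  have hκ' : derivative κ = C ((derivative κ).coeff 0) :=
    eq_C_of_natDegree_le_zero ((natDegree_derivative_le _).trans (by omega))
  refine Polynomial.funext fun z => mul_left_cancel₀ (hρ0 z) ?_
  have hode := iteratedDeriv_pow_mul_ode hσ hκ hρ hrel z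
  rw [iteratedDeriv_succ, iteratedDeriv_succ, hQ,
    eval_mul_deriv_deriv_eval_mul_add (hρ.of_le (by norm_cast; omega)) hrel, hσ'', hκ'] at hode
  simp only [eval_add, eval_mul, eval_C] at hode ⊢
  linear_combination hode

end

/-- The Rodrigues formula: `P_n(σ,κ;·)` is a polynomial of degree ≤ `n` and satisfies
`σP_n'' + (σ'+κ)P_n' − (n(n+1)σ''/2 + nκ')P_n = 0`. -/
theorem rodrigues_polynomial_and_equation (σ κ : Polynomial ℂ)
    (hσ : σ.natDegree ≤ 2) (hκ : κ.natDegree ≤ 1)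
    (ρ : ℂ → ℂ) (hρ : ContDiff ℂ ⊤ ρ) (hρ0 : ∀ z, ρ z ≠ 0)
    (hrel : ∀ z, σ.eval z * deriv ρ z = κ.eval z * ρ z) (n : ℕ) :
    (∃ Q : Polynomial ℂ, Q.natDegree ≤ n ∧ ∀ z, rodrigues σ ρ n z = Q.eval z) ∧
    (∀ z : ℂ,
      σ.eval z * deriv (deriv (rodrigues σ ρ n)) z
        + ((derivative σ).eval z + κ.eval z) * deriv (rodrigues σ ρ n) z
        - ((n : ℂ) * ((n : ℂ) + 1) * (derivative (derivative σ)).coeff 0 / 2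
            + (n : ℂ) * (derivative κ).coeff 0) * rodrigues σ ρ n z = 0) := by
  obtain ⟨Q, hQdeg, hQ⟩ := exists_iteratedDeriv_pow_mul_eq hσ hκ
    (hρ.differentiable (by simp)) hrel (le_refl n)
  simp only [Nat.sub_self, pow_zero, one_mul] at hQ
  set P := C ((n.factorial : ℂ)⁻¹) * Q
  have hP : rodrigues σ ρ n = fun z => P.eval z := funext fun z => by
    simp only [rodrigues, hQ, P, eval_mul, eval_C]
    field_simp [hρ0 z]
  refine ⟨⟨P, (natDegree_C_mul_le _ _).trans hQdeg, fun z => by rw [hP]⟩, fun z => ?_⟩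
  have hQode := congrArg (eval z)
    (ode_of_iteratedDeriv_pow_mul_eq hσ hκ (hρ.of_le le_top) hρ0 hrel hQ)
  have hd : deriv (fun z => P.eval z) = fun z => (derivative P).eval z := funext fun _ => P.deriv
  rw [hP, hd, Polynomial.deriv]
  simp only [P, derivative_C_mul, eval_mul, eval_add, eval_C] at hQode ⊢
  linear_combination (n.factorial : ℂ)⁻¹ * hQode
end
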